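/- arXiv:1511.02734 — 5 statements merged into one kernel-verified Lean document; each statement's English description precedes it below -/
import Mathlib

section
/- Let E be a finite set. Two separations (A₁,A₂) and (B₁,B₂) of E are nested if Aᵢ ⊆ Bⱼ for some pair (i,j) ∈ {1,2} × {1,2}. Let (A,B), (C,D), (E₀,F) be separations of E such that (A,B) and (C,D) are not nested, but (E₀,F) is nested with both (A,B) and (C,D). Then the corner separation (A ∩ C, B ∪ D) is nested with (E₀,F). -/
variable {E : Type*}

/-- `f` is symmetric: `f X = f (E \ X)` for all `X ⊆ E`. -/
def FSymm (f : Set E → ℤ) : Prop := ∀ X : Set E, f X = f Xᶜ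

/-- `f` is submodular. -/
def FSubmod (f : Set E → ℤ) : Prop :=
  ∀ X Y : Set E, f (X ∩ Y) + f (X ∪ Y) ≤ f X + f Y

/-- Separations `(A,B)` and `(C,D)` are nested: some side of the first
is contained in some side of the second. -/
def Nested (A B C D : Set E) : Prop := A ⊆ C ∨ A ⊆ D ∨ B ⊆ C ∨ B ⊆ D

/-- `T` is a tangle of order `k+1`: a set of small sides of separations of
order at most `k`, orienting every separation of order at most `k`, such that
no three small sides cover `E` and the complement of a singleton is never small. -/
def IsTangle (f : Set E → ℤ) (k : ℤ) (T : Set (Set E)) : Prop :=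
  (∀ A ∈ T, f A ≤ k) ∧
  (∀ A : Set E, f A ≤ k → A ∈ T ∨ Aᶜ ∈ T) ∧
  (∀ A₁ ∈ T, ∀ A₂ ∈ T, ∀ A₃ ∈ T, A₁ ∪ A₂ ∪ A₃ ≠ Set.univ) ∧
  (∀ e : E, ({e}ᶜ : Set E) ∉ T)

/-- A tangle is maximal if it is not included in any other tangle. -/
def IsMaximalTangle (f : Set E → ℤ) (T : Set (Set E)) : Prop :=
  (∃ k, IsTangle f k T) ∧
  ∀ T' : Set (Set E), (∃ k, IsTangle f k T') → T ⊆ T' → T' = T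

/-- The separation with sides `A`, `Aᶜ` distinguishes the tangles `P` and `Q`. -/
def Distinguishes (A : Set E) (P Q : Set (Set E)) : Prop :=
  (A ∈ P ∧ Aᶜ ∈ Q) ∨ (Aᶜ ∈ P ∧ A ∈ Q)

/-- The separation with sides `A`, `Aᶜ` distinguishes `P` and `Q` efficiently. -/
def DistinguishesEff (f : Set E → ℤ) (A : Set E) (P Q : Set (Set E)) : Prop :=
  Distinguishes A P Q ∧ ∀ C : Set E, Distinguishes C P Q → f A ≤ f C

/-- If `(A,B)` and `(C,D)` are not nested but `(E₀,F)` is nested with both,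
then the corner separation `(A ∩ C, B ∪ D)` is nested with `(E₀,F)`. -/
theorem stmt_1 [Fintype E] (A B C D E₀ F : Set E)
    (hB : B = Aᶜ) (hD : D = Cᶜ) (hF : F = E₀ᶜ)
    (hnn : ¬ Nested A B C D)
    (h1 : Nested E₀ F A B) (h2 : Nested E₀ F C D) :
    Nested (A ∩ C) (B ∪ D) E₀ F := by
  subst hB hD hF
  unfold Nested at *
  push_neg at hnn
  obtain ⟨n1, n2, n3, n4⟩ := hnn
  rcases h1 with h | h | h | h <;> rcases h2 with g | g | g | g
  · -- E₀⊆A, E₀⊆C : Aᶜ∪Cᶜ ⊆ E₀ᶜ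
    exact Or.inr (Or.inr (Or.inr (Set.union_subset (Set.compl_subset_compl.mpr h) (Set.compl_subset_compl.mpr g))))
  · -- E₀⊆A, E₀⊆Cᶜ : A∩C ⊆ E₀ᶜ
    exact Or.inr (Or.inl (fun x hx hE => g hE hx.2))
  · -- E₀⊆A, E₀ᶜ⊆C : B⊆C contra
    exact absurd ((Set.compl_subset_compl.mpr h).trans g) n3
  · -- E₀⊆A, E₀ᶜ⊆Cᶜ : B⊆D contra
    exact absurd ((Set.compl_subset_compl.mpr h).trans g) n4
  · -- E₀⊆Aᶜ, E₀⊆C : A∩C ⊆ E₀ᶜ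
    exact Or.inr (Or.inl (fun x hx hE => h hE hx.1))
  · -- E₀⊆Aᶜ, E₀⊆Cᶜ
    exact Or.inr (Or.inl (fun x hx hE => h hE hx.1))
  · -- E₀⊆Aᶜ, E₀ᶜ⊆C : A⊆C contra
    exact absurd ((Set.subset_compl_comm.mp h).trans g) n1
  · -- E₀⊆Aᶜ, E₀ᶜ⊆Cᶜ : A⊆D contra
    exact absurd ((Set.subset_compl_comm.mp h).trans g) n2
  · -- E₀ᶜ⊆A, E₀⊆C : D⊆A ⇒ B⊆C contra
    exact absurd ((Set.compl_subset_compl.mpr ((Set.compl_subset_compl.mpr g).trans h)).trans (by simp)) n3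
  · -- E₀ᶜ⊆A, E₀⊆Cᶜ : C⊆A ⇒ B⊆D contra
    exact absurd (Set.compl_subset_compl.mpr ((Set.subset_compl_comm.mp g).trans h)) n4
  · -- E₀ᶜ⊆A, E₀ᶜ⊆C : B∪D ⊆ E₀
    exact Or.inr (Or.inr (Or.inl (Set.union_subset (Set.compl_subset_comm.mp h) (Set.compl_subset_comm.mp g))))
  · -- E₀ᶜ⊆A, E₀ᶜ⊆Cᶜ : C⊆E₀ ⇒ A∩C⊆E₀
    exact Or.inl ((Set.inter_subset_right).trans (Set.compl_subset_compl.mp g))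
  · -- E₀ᶜ⊆Aᶜ, E₀⊆C : Cᶜ⊆Aᶜ ⇒ A⊆C contra
    exact absurd (Set.compl_subset_compl.mp ((Set.compl_subset_compl.mpr g).trans h)) n1
  · -- E₀ᶜ⊆Aᶜ, E₀⊆Cᶜ : C⊆Aᶜ ⇒ A⊆Cᶜ contra (A⊆D)
    exact absurd (Set.subset_compl_comm.mp ((Set.subset_compl_comm.mp g).trans h)) n2
  · -- E₀ᶜ⊆Aᶜ, E₀ᶜ⊆C : A⊆E₀
    exact Or.inl ((Set.inter_subset_left).trans (Set.compl_subset_compl.mp h))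
  · -- E₀ᶜ⊆Aᶜ, E₀ᶜ⊆Cᶜ
    exact Or.inl ((Set.inter_subset_left).trans (Set.compl_subset_compl.mp h))
end

section
/- For every nested symmetric set N of separations of a finite set E, there exists a tree-decomposition (T, (P_t | t ∈ V(T))) of E such that the separations corresponding to edges of T are precisely the members of N. -/
variable {E : Type*}

variable {V : Type*}

/-- `P` is a partition of `E` into (possibly empty) classes indexed by `V`. -/
def IsPartitionFam (P : V → Set E) : Prop :=
  (∀ x y : V, x ≠ y → Disjoint (P x) (P y)) ∧ (⋃ x, P x) = Set.univ

/-- For an edge `tu` of the decomposition tree `G`, the side `S_t` of the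
corresponding separation: the union of the parts over the component of
`G - tu` containing `t`. -/
def treeSide (G : SimpleGraph V) (P : V → Set E) (t u : V) : Set E :=
  ⋃ x ∈ {x | (G.deleteEdges {s(t, u)}).Reachable t x}, P x

/-!
Induction on `|N|`. Let `A` be an inclusion-minimal side of a separation in `N`. Nestedness and
minimality force every other separation `(B, Bᶜ) ∈ N` to have `A ⊆ B` or `A ⊆ Bᶜ`. Take a
tree-decomposition of `N` without `(A, Aᶜ)` and `(Aᶜ, A)`; since no edge separation splits `A`,
`A` lies inside a single part `P t`. Attaching a new leaf to `t` with part `A` (and removing `A`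
from `P t`) creates exactly the separations `(A, Aᶜ)`, `(Aᶜ, A)` and leaves all others unchanged.
-/

namespace SimpleGraph

def addLeaf (G : SimpleGraph V) (t : V) : SimpleGraph (Option V) :=
  G.map some ⊔ edge none (some t)

section addLeaf

variable {G : SimpleGraph V} {t : V}

@[simp] lemma addLeaf_adj_some_some {u v : V} :
    (G.addLeaf t).Adj (some u) (some v) ↔ G.Adj u v := by
  simpa [addLeaf, map_adj', edge_adj] using Adj.ne

@[simp] lemma addLeaf_adj_none_left {b : Option V} : (G.addLeaf t).Adj none b ↔ b = some t := by
  cases b <;> simp [addLeaf, map_adj', edge_adj]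

@[simp] lemma addLeaf_adj_none_right {a : Option V} :
    (G.addLeaf t).Adj a none ↔ a = some t := by
  rw [adj_comm, addLeaf_adj_none_left]

lemma addLeaf_deleteEdges {u v : V} :
    (G.addLeaf t).deleteEdges {s(some u, some v)} = (G.deleteEdges {s(u, v)}).addLeaf t := by
  ext (_ | a) (_ | b) <;> simp

lemma Reachable.getD_of_addLeaf {a b : Option V} (h : (G.addLeaf t).Reachable a b) :
    G.Reachable (a.getD t) (b.getD t) := by
  obtain ⟨w⟩ := h
  induction w with
  | nil => rfl
  | @cons a b c hab _ ih =>
    refine .trans ?_ ih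
    rcases a with _ | a <;> rcases b with _ | b
    · simp at hab
    · simp_all
    · simp_all
    · exact (addLeaf_adj_some_some.1 hab).reachable

lemma reachable_addLeaf_some_some {p q : V} :
    (G.addLeaf t).Reachable (some p) (some q) ↔ G.Reachable p q :=
  ⟨Reachable.getD_of_addLeaf, .map ⟨some, addLeaf_adj_some_some.2⟩⟩

lemma reachable_addLeaf_some_none {p : V} :
    (G.addLeaf t).Reachable (some p) none ↔ G.Reachable p t :=
  ⟨Reachable.getD_of_addLeaf, fun h =>
    (reachable_addLeaf_some_some.2 h).trans (addLeaf_adj_none_right.2 rfl).reachable⟩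

lemma eq_none_of_reachable_addLeaf_deleteEdges_leafEdge {y : Option V}
    (h : ((G.addLeaf t).deleteEdges {s(none, some t)}).Reachable none y) : y = none := by
  obtain ⟨_ | ⟨hadj, _⟩⟩ := h
  · rfl
  · simp at hadj

lemma reachable_addLeaf_deleteEdges_leafEdge {p q : V} (h : G.Reachable p q) :
    ((G.addLeaf t).deleteEdges {s(none, some t)}).Reachable (some p) (some q) :=
  h.map ⟨some, fun hadj => by simpa using hadj⟩

lemma IsTree.addLeaf (hG : G.IsTree) (t : V) : (G.addLeaf t).IsTree := by
  have hub : ∀ a, (G.addLeaf t).Reachable a (some t)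
    | none => (addLeaf_adj_none_left.2 rfl).reachable
    | some x => reachable_addLeaf_some_some.2 (hG.connected.preconnected x t)
  refine ⟨.mk fun a b => (hub a).trans (hub b).symm, ?_⟩
  rw [isAcyclic_iff_forall_adj_isBridge]
  rintro (_ | u) (_ | v) hadj
  · simp at hadj
  · obtain rfl := Option.some_inj.1 (addLeaf_adj_none_left.1 hadj)
    rw [isBridge_iff]
    exact fun h => Option.some_ne_none _ (eq_none_of_reachable_addLeaf_deleteEdges_leafEdge h)
  · obtain rfl := Option.some_inj.1 (addLeaf_adj_none_right.1 hadj)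
    rw [isBridge_iff, Sym2.eq_swap]
    exact fun h => Option.some_ne_none _ (eq_none_of_reachable_addLeaf_deleteEdges_leafEdge h.symm)
  · rw [isBridge_iff, addLeaf_deleteEdges, reachable_addLeaf_some_some]
    exact isAcyclic_iff_forall_adj_isBridge.1 hG.isAcyclic (addLeaf_adj_some_some.1 hadj)

end addLeaf

lemma IsTree.exists_adj_reachable_deleteEdges {G : SimpleGraph V} (hG : G.IsTree)
    {t u : V} (htu : t ≠ u) : ∃ v, G.Adj t v ∧ (G.deleteEdges {s(t, v)}).Reachable v u := by
  classical
  obtain ⟨p, hp⟩ := (hG.connected.preconnected t u).exists_isPath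
  cases p with
  | nil => exact absurd rfl htu
  | @cons _ v _ hadj q =>
    rw [Walk.cons_isPath_iff] at hp
    refine ⟨v, hadj, ⟨q.toDeleteEdges _ fun e he hte => hp.2 ?_⟩⟩
    rw [Set.mem_singleton_iff] at hte
    exact q.fst_mem_support_of_mem_edges (hte ▸ he)

end SimpleGraph

lemma IsPartitionFam.exists_mem {P : V → Set E} (hP : IsPartitionFam P) (z : E) : ∃ x, z ∈ P x :=
  Set.mem_iUnion.1 (hP.2 ▸ Set.mem_univ z)

lemma IsPartitionFam.eq_of_mem {P : V → Set E} (hP : IsPartitionFam P) {z : E} {x y : V}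
    (hx : z ∈ P x) (hy : z ∈ P y) : x = y :=
  by_contra fun hne => (hP.1 x y hne).ne_of_mem hx hy rfl

lemma mem_treeSide {G : SimpleGraph V} {P : V → Set E} {t u : V} {z : E} :
    z ∈ treeSide G P t u ↔ ∃ x, (G.deleteEdges {s(t, u)}).Reachable t x ∧ z ∈ P x := by
  simp only [treeSide, Set.mem_iUnion, Set.mem_ofPred_eq, exists_prop]

open SimpleGraph

section treeSide

variable {G : SimpleGraph V} {t : V}

def leafPartition (P : V → Set E) (A : Set E) : Option V → Set E :=
  fun o => o.elim A fun x => P x \ A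

lemma IsPartitionFam.leafPartition {P : V → Set E} (hP : IsPartitionFam P) (A : Set E) :
    IsPartitionFam (leafPartition P A) := by
  refine ⟨?_, Set.eq_univ_of_forall fun z => ?_⟩
  · rintro (_ | x) (_ | y) hxy
    · exact absurd rfl hxy
    · exact Set.disjoint_sdiff_right
    · exact Set.disjoint_sdiff_left
    · exact (hP.1 x y (ne_of_apply_ne _ hxy)).mono Set.sdiff_subset Set.sdiff_subset
  · obtain ⟨x, hx⟩ := hP.exists_mem z
    by_cases hz : z ∈ A
    · exact Set.mem_iUnion.2 ⟨none, hz⟩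
    · exact Set.mem_iUnion.2 ⟨some x, hx, hz⟩

lemma treeSide_addLeaf_none (Q : Option V → Set E) :
    treeSide (G.addLeaf t) Q none (some t) = Q none := by
  ext z
  rw [mem_treeSide]
  constructor
  · rintro ⟨y, hy, hz⟩
    rwa [eq_none_of_reachable_addLeaf_deleteEdges_leafEdge hy] at hz
  · exact fun hz => ⟨none, .rfl, hz⟩

lemma treeSide_addLeaf_some_none (hG : G.Preconnected) (Q : Option V → Set E) :
    treeSide (G.addLeaf t) Q (some t) none = ⋃ x, Q (some x) := by
  ext z
  simp only [mem_treeSide, Set.mem_iUnion, Sym2.eq_swap (a := some t)]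
  constructor
  · rintro ⟨_ | x, hy, hz⟩
    · exact absurd (eq_none_of_reachable_addLeaf_deleteEdges_leafEdge hy.symm) (by simp)
    · exact ⟨x, hz⟩
  · rintro ⟨x, hz⟩
    exact ⟨some x, reachable_addLeaf_deleteEdges_leafEdge (hG t x), hz⟩

lemma treeSide_addLeaf_some_some {P : V → Set E} {A : Set E}
    (hP : IsPartitionFam P) (hA : A ⊆ P t) (u v : V) :
    treeSide (G.addLeaf t) (leafPartition P A) (some u) (some v) = treeSide G P u v := by
  ext z
  simp only [mem_treeSide, addLeaf_deleteEdges]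
  constructor
  · rintro ⟨_ | x, hx, hz⟩
    · exact ⟨t, reachable_addLeaf_some_none.1 hx, hA hz⟩
    · exact ⟨x, reachable_addLeaf_some_some.1 hx, hz.1⟩
  · rintro ⟨x, hx, hz⟩
    by_cases hzA : z ∈ A
    · obtain rfl := hP.eq_of_mem hz (hA hzA)
      exact ⟨none, reachable_addLeaf_some_none.2 hx, hzA⟩
    · exact ⟨some x, reachable_addLeaf_some_some.2 hx, hz, hzA⟩

end treeSide

def edgeSeparations (G : SimpleGraph V) (P : V → Set E) : Set (Set E × Set E) :=
  {p | ∃ t u, G.Adj t u ∧ p = (treeSide G P t u, treeSide G P u t)}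

lemma edgeSeparations_addLeaf {G : SimpleGraph V} {P : V → Set E} {A : Set E} {t : V}
    (hG : G.Preconnected) (hP : IsPartitionFam P) (hA : A ⊆ P t) :
    edgeSeparations (G.addLeaf t) (leafPartition P A) =
      {(A, Aᶜ), (Aᶜ, A)} ∪ edgeSeparations G P := by
  have hAc : treeSide (G.addLeaf t) (leafPartition P A) (some t) none = Aᶜ := by
    rw [treeSide_addLeaf_some_none hG]
    exact (Set.iUnion_sdiff _ _).symm.trans (by rw [hP.2, Set.compl_eq_univ_sdiff])
  have hleaf := treeSide_addLeaf_none (G := G) (t := t) (leafPartition P A)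
  have hold := treeSide_addLeaf_some_some (G := G) hP hA
  ext p
  constructor
  · rintro ⟨_ | u, _ | v, hadj, rfl⟩
    · simp at hadj
    · obtain rfl := Option.some_inj.1 (addLeaf_adj_none_left.1 hadj)
      left; rw [hleaf, hAc]; simp [leafPartition]
    · obtain rfl := Option.some_inj.1 (addLeaf_adj_none_right.1 hadj)
      left; rw [hleaf, hAc]; simp [leafPartition]
    · exact .inr ⟨u, v, addLeaf_adj_some_some.1 hadj, by rw [hold, hold]⟩
  · rintro ((rfl | rfl) | ⟨u, v, huv, rfl⟩)
    · exact ⟨none, some t, addLeaf_adj_none_left.2 rfl, by rw [hleaf, hAc]; rfl⟩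
    · exact ⟨some t, none, addLeaf_adj_none_right.2 rfl, by rw [hleaf, hAc]; rfl⟩
    · exact ⟨some u, some v, addLeaf_adj_some_some.2 huv, by rw [hold, hold]⟩

lemma exists_subset_part_of_subset_or_subset_compl {G : SimpleGraph V} {P : V → Set E} {A : Set E}
    (hG : G.IsTree) (hP : IsPartitionFam P)
    (hA : ∀ t u, G.Adj t u → A ⊆ treeSide G P t u ∨ A ⊆ (treeSide G P t u)ᶜ) :
    ∃ t, A ⊆ P t := by
  rcases A.eq_empty_or_nonempty with rfl | ⟨e, he⟩
  · exact ⟨hG.connected.nonempty.some, Set.empty_subset _⟩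
  obtain ⟨t, het⟩ := hP.exists_mem e
  refine ⟨t, fun z hz => ?_⟩
  obtain ⟨u, hzu⟩ := hP.exists_mem z
  obtain rfl | htu := eq_or_ne t u
  · exact hzu
  -- the first edge `tv` of the path from `t` to `u` would separate `e ∈ P t` from `z ∈ P u`
  obtain ⟨v, htv, hvu⟩ := hG.exists_adj_reachable_deleteEdges htu
  have he_side : e ∈ treeSide G P t v := mem_treeSide.2 ⟨t, .rfl, het⟩
  have hA_side : A ⊆ treeSide G P t v := (hA t v htv).resolve_right fun h => h he he_side
  obtain ⟨y, hty, hzy⟩ := mem_treeSide.1 (hA_side hz)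
  obtain rfl := hP.eq_of_mem hzy hzu
  exact absurd (hty.trans hvu.symm) (isAcyclic_iff_forall_adj_isBridge.1 hG.isAcyclic htv)

structure IsNestedSymmetric (N : Set (Set E × Set E)) : Prop where
  snd_eq_compl : ∀ p ∈ N, p.2 = p.1ᶜ
  nested : ∀ p ∈ N, ∀ q ∈ N, Nested p.1 p.2 q.1 q.2
  mem_iff_swap_mem : ∀ p : Set E × Set E, p ∈ N ↔ (p.2, p.1) ∈ N

namespace IsNestedSymmetric

variable {N : Set (Set E × Set E)} {A : Set E}

lemma mk_mem_of_fst_mem (hN : IsNestedSymmetric N) (hA : A ∈ Prod.fst '' N) : (A, Aᶜ) ∈ N := by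
  obtain ⟨p, hp, rfl⟩ := hA
  rwa [← hN.snd_eq_compl p hp]

lemma diff_pair (hN : IsNestedSymmetric N) (A : Set E) :
    IsNestedSymmetric (N \ {(A, Aᶜ), (Aᶜ, A)}) where
  snd_eq_compl p hp := hN.snd_eq_compl p hp.1
  nested p hp q hq := hN.nested p hp.1 q hq.1
  mem_iff_swap_mem := by
    rintro ⟨B, C⟩
    simp only [Set.mem_sdiff, Set.mem_insert_iff, Set.mem_singleton_iff, Prod.mk.injEq,
      ← hN.mem_iff_swap_mem (B, C)]
    tauto

lemma subset_or_subset_compl_of_minimal (hN : IsNestedSymmetric N)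
    (hA : Minimal (· ∈ Prod.fst '' N) A) {q : Set E × Set E}
    (hq : q ∈ N \ {(A, Aᶜ), (Aᶜ, A)}) : A ⊆ q.1 ∨ A ⊆ q.1ᶜ := by
  obtain ⟨B, C⟩ := q
  obtain ⟨hqN, hqA⟩ := hq
  obtain rfl : C = Bᶜ := hN.snd_eq_compl _ hqN
  have hB : B ∈ Prod.fst '' N := ⟨_, hqN, rfl⟩
  have hBc : Bᶜ ∈ Prod.fst '' N := ⟨_, (hN.mem_iff_swap_mem _).1 hqN, rfl⟩
  have hAN := hN.mk_mem_of_fst_mem hA.prop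
  rcases hN.nested _ hAN _ hqN with h | h | h | h
  · exact .inl h
  · exact .inr h
  · obtain rfl := (hA.eq_of_subset hBc (Set.compl_subset_comm.1 h)).symm
    simp at hqA
  · obtain rfl := (hA.eq_of_subset hB (Set.compl_subset_compl.1 h)).symm
    simp at hqA

end IsNestedSymmetric

def HasTreeDecomposition (N : Set (Set E × Set E)) : Prop :=
  ∃ (V : Type) (_ : Fintype V) (G : SimpleGraph V) (P : V → Set E),
    G.IsTree ∧ IsPartitionFam P ∧ edgeSeparations G P = N

lemma hasTreeDecomposition_empty : HasTreeDecomposition (∅ : Set (Set E × Set E)) := by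
  refine ⟨Unit, inferInstance, ⊥, fun _ => Set.univ, .of_subsingleton, ⟨?_, Set.iUnion_const _⟩, ?_⟩
  · exact fun x y hxy => absurd (Subsingleton.elim x y) hxy
  · exact Set.eq_empty_of_forall_notMem fun _ ⟨_, _, h, _⟩ => h

lemma HasTreeDecomposition.union_pair {N : Set (Set E × Set E)} (hN : HasTreeDecomposition N)
    {A : Set E} (hA : ∀ q ∈ N, A ⊆ q.1 ∨ A ⊆ q.1ᶜ) :
    HasTreeDecomposition ({(A, Aᶜ), (Aᶜ, A)} ∪ N) := by
  obtain ⟨V, _, G, P, hG, hP, rfl⟩ := hN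
  obtain ⟨t, hAt⟩ := exists_subset_part_of_subset_or_subset_compl hG hP
    fun u v huv => hA _ ⟨u, v, huv, rfl⟩
  exact ⟨Option V, inferInstance, G.addLeaf t, leafPartition P A, hG.addLeaf t,
    hP.leafPartition A, edgeSeparations_addLeaf hG.connected.preconnected hP hAt⟩

theorem IsNestedSymmetric.hasTreeDecomposition [Finite E] {N : Set (Set E × Set E)}
    (hN : IsNestedSymmetric N) : HasTreeDecomposition N := by
  induction hn : N.ncard using Nat.strong_induction_on generalizing N with
  | _ n ih =>
    rcases N.eq_empty_or_nonempty with rfl | ⟨p, hp⟩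
    · exact hasTreeDecomposition_empty
    obtain ⟨A, hA⟩ := exists_minimal_of_wellFoundedLT (· ∈ Prod.fst '' N) ⟨p.1, p, hp, rfl⟩
    have hAN := hN.mk_mem_of_fst_mem hA.prop
    have hpair : {(A, Aᶜ), (Aᶜ, A)} ⊆ N :=
      Set.insert_subset hAN (Set.singleton_subset_iff.2 ((hN.mem_iff_swap_mem _).1 hAN))
    have hlt : (N \ {(A, Aᶜ), (Aᶜ, A)}).ncard < n :=
      hn ▸ Set.ncard_lt_ncard (Set.sdiff_ssubset_left_iff.2 ⟨_, hAN, .inl rfl⟩) N.toFinite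
    have hrest := ih _ hlt (hN.diff_pair A) rfl
    rw [← Set.union_sdiff_cancel hpair]
    exact hrest.union_pair fun q hq => hN.subset_or_subset_compl_of_minimal hA hq

/-- For every nested symmetric set `N` of separations there is a
tree-decomposition whose edge-separations are precisely the members of `N`. -/
theorem stmt_12 [Fintype E] (N : Set (Set E × Set E))
    (hSep : ∀ p ∈ N, p.2 = p.1ᶜ)
    (hNested : ∀ p ∈ N, ∀ q ∈ N, Nested p.1 p.2 q.1 q.2)
    (hSymm : ∀ p : Set E × Set E, p ∈ N ↔ (p.2, p.1) ∈ N) :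
    ∃ (V : Type) (_ : Fintype V) (G : SimpleGraph V) (P : V → Set E),
      G.IsTree ∧ IsPartitionFam P ∧
      {p : Set E × Set E | ∃ t u, G.Adj t u ∧
        p = (treeSide G P t u, treeSide G P u t)} = N :=
  IsNestedSymmetric.hasTreeDecomposition ⟨hSep, hNested, hSymm⟩
end

section
/- Let E be a finite set with symmetric submodular order function, and let N be a maximal nested set of separations such that each separation in N distinguishes some pair of tangles efficiently. Then for any two maximal tangles P and Q, some separation in N distinguishes P and Q efficiently. -/
variable {E : Type*}

section Aux

variable {f : Set E → ℤ} {k k' k'' kP kQ : ℤ} {T P Q P' Q' : Set (Set E)}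
variable {A B C D X Y Z : Set E}

/-- If `X ∈ T` then no superset of `Xᶜ` is in `T`. -/
lemma aux_excl1 (hT : IsTangle f k T) (hX : X ∈ T) (h : Xᶜ ⊆ Y) : Y ∉ T := by
  intro hY
  refine hT.2.2.1 X hX Y hY Y hY ?_
  apply Set.eq_univ_of_forall
  intro e
  by_cases he : e ∈ X
  · exact Or.inl (Or.inl he)
  · exact Or.inr (h he)

/-- If `X, Y ∈ T` then no superset of `(X ∪ Y)ᶜ` is in `T`. -/
lemma aux_excl2 (hT : IsTangle f k T) (hX : X ∈ T) (hY : Y ∈ T)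
    (h : (X ∪ Y)ᶜ ⊆ Z) : Z ∉ T := by
  intro hZ
  refine hT.2.2.1 X hX Y hY Z hZ ?_
  apply Set.eq_univ_of_forall
  intro e
  by_cases he : e ∈ X ∪ Y
  · exact Or.inl he
  · exact Or.inr (h he)

lemma aux_memInter (hT : IsTangle f k T) (hA : A ∈ T) (hf : f (A ∩ C) ≤ k) :
    A ∩ C ∈ T :=
  (hT.2.1 _ hf).resolve_right
    (aux_excl1 hT hA (Set.compl_subset_compl.mpr Set.inter_subset_left))

lemma aux_memUnion (hT : IsTangle f k T) (hA : A ∈ T) (hC : C ∈ T)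
    (hf : f (A ∪ C) ≤ k) : A ∪ C ∈ T :=
  (hT.2.1 _ hf).resolve_right (aux_excl2 hT hA hC subset_rfl)

lemma aux_distSymm (h : Distinguishes A P Q) : Distinguishes A Q P :=
  h.elim (fun h => Or.inr ⟨h.2, h.1⟩) (fun h => Or.inl ⟨h.2, h.1⟩)

lemma aux_distCompl (h : Distinguishes A P Q) : Distinguishes Aᶜ P Q := by
  rcases h with ⟨h1, h2⟩ | ⟨h1, h2⟩
  · exact Or.inr ⟨by rwa [compl_compl], h2⟩
  · exact Or.inl ⟨h1, by rwa [compl_compl]⟩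

lemma aux_effSymm (h : DistinguishesEff f A P Q) : DistinguishesEff f A Q P :=
  ⟨aux_distSymm h.1, fun C hC => h.2 C (aux_distSymm hC)⟩

lemma aux_effCompl (hsym : FSymm f) (h : DistinguishesEff f A P Q) :
    DistinguishesEff f Aᶜ P Q :=
  ⟨aux_distCompl h.1, fun C hC => by rw [← hsym A]; exact h.2 C hC⟩

lemma aux_nestedComm (h : Nested A Aᶜ C Cᶜ) : Nested C Cᶜ A Aᶜ := by
  rcases h with h | h | h | h
  · exact Or.inr (Or.inr (Or.inr (Set.compl_subset_compl.mpr h)))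
  · exact Or.inr (Or.inl (Set.subset_compl_comm.mp h))
  · exact Or.inr (Or.inr (Or.inl (Set.compl_subset_comm.mp h)))
  · exact Or.inl (Set.compl_subset_compl.mp h)

lemma aux_nestedComplLeft : Nested Aᶜ Aᶜᶜ C Cᶜ ↔ Nested A Aᶜ C Cᶜ := by
  simp only [Nested, compl_compl]
  tauto

lemma aux_nestedComplRight : Nested A Aᶜ Cᶜ Cᶜᶜ ↔ Nested A Aᶜ C Cᶜ := by
  simp only [Nested, compl_compl]
  tauto

/-- A corner of two crossing separations is nested with every separation
nested with both of them. -/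
lemma aux_interNested (h : ¬ Nested A Aᶜ C Cᶜ) (hAD : Nested A Aᶜ D Dᶜ)
    (hCD : Nested C Cᶜ D Dᶜ) : Nested (A ∩ C) (A ∩ C)ᶜ D Dᶜ := by
  rcases hAD with h1 | h1 | h1 | h1
  · exact Or.inl (Set.inter_subset_left.trans h1)
  · exact Or.inr (Or.inl (Set.inter_subset_left.trans h1))
  · rcases hCD with h2 | h2 | h2 | h2
    · exact Or.inl (Set.inter_subset_right.trans h2)
    · exact absurd (Or.inr (Or.inr (Or.inr (Set.compl_subset_compl.mpr
        (h2.trans (Set.compl_subset_comm.mp h1)))))) h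
    · refine Or.inr (Or.inr (Or.inl ?_))
      rw [Set.compl_inter]
      exact Set.union_subset h1 h2
    · exact absurd (Or.inr (Or.inr (Or.inl
        (h1.trans (Set.compl_subset_compl.mp h2))))) h
  · rcases hCD with h2 | h2 | h2 | h2
    · exact absurd (Or.inr (Or.inr (Or.inr (Set.compl_subset_compl.mpr
        (h2.trans (Set.compl_subset_compl.mp h1)))))) h
    · exact Or.inr (Or.inl (Set.inter_subset_right.trans h2))
    · exact absurd (Or.inr (Or.inr (Or.inl (Set.compl_subset_comm.mpr
        (h2.trans (Set.compl_subset_compl.mp h1)))))) h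
    · refine Or.inr (Or.inr (Or.inr ?_))
      rw [Set.compl_inter]
      exact Set.union_subset h1 h2

/-- `Z` is (a side of) a corner separation of the separations given by `A` and `C`. -/
def AuxCorner (A C Z : Set E) : Prop :=
  ∃ A' C' : Set E, (A' = A ∨ A' = Aᶜ) ∧ (C' = C ∨ C' = Cᶜ) ∧
    (Z = A' ∩ C' ∨ Z = (A' ∩ C')ᶜ)

lemma aux_cornerComplA (h : AuxCorner Aᶜ C Z) : AuxCorner A C Z := by
  obtain ⟨A', C', hA', hC', hZ⟩ := h
  rw [compl_compl] at hA'
  exact ⟨A', C', hA'.symm, hC', hZ⟩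

lemma aux_cornerComplC (h : AuxCorner A Cᶜ Z) : AuxCorner A C Z := by
  obtain ⟨A', C', hA', hC', hZ⟩ := h
  rw [compl_compl] at hC'
  exact ⟨A', C', hA', hC'.symm, hZ⟩

lemma aux_cornerNestedC (h : AuxCorner A C Z) : Nested Z Zᶜ C Cᶜ := by
  obtain ⟨A', C', hA', hC', hZ⟩ := h
  rcases hZ with rfl | rfl
  · rcases hC' with rfl | rfl
    · exact Or.inl Set.inter_subset_right
    · exact Or.inr (Or.inl Set.inter_subset_right)
  · rcases hC' with rfl | rfl
    · exact Or.inr (Or.inr (Or.inl (by rw [compl_compl]; exact Set.inter_subset_right)))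
    · exact Or.inr (Or.inr (Or.inr (by rw [compl_compl]; exact Set.inter_subset_right)))

lemma aux_cornerNested (h : ¬ Nested A Aᶜ C Cᶜ) (hZ : AuxCorner A C Z)
    (hAD : Nested A Aᶜ D Dᶜ) (hCD : Nested C Cᶜ D Dᶜ) : Nested Z Zᶜ D Dᶜ := by
  obtain ⟨A', C', hA', hC', hZ⟩ := hZ
  have hA'D : Nested A' A'ᶜ D Dᶜ := by
    rcases hA' with rfl | rfl
    · exact hAD
    · exact aux_nestedComplLeft.mpr hAD
  have hC'D : Nested C' C'ᶜ D Dᶜ := by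
    rcases hC' with rfl | rfl
    · exact hCD
    · exact aux_nestedComplLeft.mpr hCD
  have h' : ¬ Nested A' A'ᶜ C' C'ᶜ := by
    rcases hA' with rfl | rfl <;> rcases hC' with rfl | rfl
    · exact h
    · exact fun hc => h (aux_nestedComplRight.mp hc)
    · exact fun hc => h (aux_nestedComplLeft.mp hc)
    · exact fun hc => h (aux_nestedComplRight.mp (aux_nestedComplLeft.mp hc))
  have hcorner := aux_interNested h' hA'D hC'D
  rcases hZ with rfl | rfl
  · exact hcorner
  · exact aux_nestedComplLeft.mpr hcorner

/-- Efficiency contradiction: if both corners `A ∩ C`, `Aᶜ ∩ C` have order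
strictly below that of `C`, then `C` cannot efficiently distinguish `P'`,`Q'`. -/
lemma aux_X (hP' : IsTangle f k' P') (hQ' : IsTangle f k'' Q')
    (hsym : FSymm f) (hCP : C ∈ P') (hCQ : Cᶜ ∈ Q')
    (heff : DistinguishesEff f C P' Q')
    (h1 : f (A ∩ C) < f C) (h2 : f (Aᶜ ∩ C) < f C) : False := by
  have hk' : f C ≤ k' := hP'.1 C hCP
  have hk'' : f C ≤ k'' := by rw [hsym C]; exact hQ'.1 Cᶜ hCQ
  have e1 : Cᶜ ⊆ (A ∩ C)ᶜ := Set.compl_subset_compl.mpr Set.inter_subset_right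
  have e2 : Cᶜ ⊆ (Aᶜ ∩ C)ᶜ := Set.compl_subset_compl.mpr Set.inter_subset_right
  have o1P : A ∩ C ∈ P' :=
    (hP'.2.1 _ (h1.le.trans hk')).resolve_right (aux_excl1 hP' hCP e1)
  have o2P : Aᶜ ∩ C ∈ P' :=
    (hP'.2.1 _ (h2.le.trans hk')).resolve_right (aux_excl1 hP' hCP e2)
  have o1Q : A ∩ C ∈ Q' :=
    (hQ'.2.1 _ (h1.le.trans hk'')).resolve_right
      (fun hc => absurd (heff.2 _ (Or.inl ⟨o1P, hc⟩)) (not_le.mpr h1))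
  have o2Q : Aᶜ ∩ C ∈ Q' :=
    (hQ'.2.1 _ (h2.le.trans hk'')).resolve_right
      (fun hc => absurd (heff.2 _ (Or.inl ⟨o2P, hc⟩)) (not_le.mpr h2))
  refine hQ'.2.2.1 Cᶜ hCQ (A ∩ C) o1Q (Aᶜ ∩ C) o2Q ?_
  apply Set.eq_univ_of_forall
  intro e
  by_cases hC : e ∈ C <;> by_cases hA : e ∈ A <;> simp [hA, hC]

/-- If `B` is agreed on by `P'` and `Q'`, which `C` distinguishes efficiently,
then the corners `B ∩ C` and `B ∩ Cᶜ` have order at most that of `B`. -/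
lemma aux_Y (hsym : FSymm f) (hsub : FSubmod f)
    (hP' : IsTangle f k' P') (hQ' : IsTangle f k'' Q')
    (hCP : C ∈ P') (hCQ : Cᶜ ∈ Q') (heff : DistinguishesEff f C P' Q')
    (hBP : B ∈ P') (hBQ : B ∈ Q') :
    f (B ∩ C) ≤ f B ∧ f (B ∩ Cᶜ) ≤ f B := by
  have hk' : f C ≤ k' := hP'.1 C hCP
  have hk'' : f C ≤ k'' := by rw [hsym C]; exact hQ'.1 Cᶜ hCQ
  have step1 : f C ≤ f (B ∪ C) := by
    by_contra h
    push_neg at h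
    have hm1 : B ∪ C ∈ P' := aux_memUnion hP' hBP hCP (h.le.trans hk')
    have hnot : B ∪ C ∉ Q' := aux_excl2 hQ' hCQ hBQ (by
      intro e he
      simp only [Set.mem_compl_iff, Set.mem_union, Set.mem_compl_iff] at he
      push_neg at he
      exact Or.inr he.1)
    have hm2 : (B ∪ C)ᶜ ∈ Q' := (hQ'.2.1 _ (h.le.trans hk'')).resolve_left hnot
    exact absurd (heff.2 _ (Or.inl ⟨hm1, hm2⟩)) (not_le.mpr h)
  have step2 : f C ≤ f (B ∪ Cᶜ) := by
    by_contra h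
    push_neg at h
    have hm1 : B ∪ Cᶜ ∈ Q' := aux_memUnion hQ' hBQ hCQ (h.le.trans hk'')
    have hnot : B ∪ Cᶜ ∉ P' := aux_excl2 hP' hCP hBP (by
      intro e he
      simp only [Set.mem_compl_iff, Set.mem_union] at he
      push_neg at he
      exact Or.inr he.1)
    have hm2 : (B ∪ Cᶜ)ᶜ ∈ P' := (hP'.2.1 _ (h.le.trans hk')).resolve_left hnot
    exact absurd (heff.2 _ (Or.inr ⟨hm2, hm1⟩)) (not_le.mpr h)
  have s1 := hsub B C
  have s2 := hsub B Cᶜ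
  have e1 : f Cᶜ = f C := (hsym C).symm
  omega

/-- If `B ∈ P'`, `Bᶜ ∈ Q'` and `C` efficiently distinguishes `P'`,`Q'`, then
the corners `B ∩ C` and `B ∪ C` have order at most that of `B`. -/
lemma aux_M2prep (hsym : FSymm f) (hsub : FSubmod f)
    (hP' : IsTangle f k' P') (hQ' : IsTangle f k'' Q')
    (hCP : C ∈ P') (hCQ : Cᶜ ∈ Q') (heff : DistinguishesEff f C P' Q')
    (hBP : B ∈ P') (hBQ : Bᶜ ∈ Q') :
    f (B ∩ C) ≤ f B ∧ f (B ∪ C) ≤ f B := by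
  have hk' : f C ≤ k' := hP'.1 C hCP
  have hk'' : f C ≤ k'' := by rw [hsym C]; exact hQ'.1 Cᶜ hCQ
  have hBCle : (B ∪ C)ᶜ ⊆ (B ∩ C)ᶜ :=
    Set.compl_subset_compl.mpr (Set.inter_subset_left.trans Set.subset_union_left)
  have hinter : (Bᶜ ∪ Cᶜ)ᶜ = B ∩ C := by
    rw [Set.compl_union, compl_compl, compl_compl]
  have step1 : f C ≤ f (B ∩ C) := by
    by_contra h
    push_neg at h
    have hm1 : B ∩ C ∈ P' :=
      (hP'.2.1 _ (h.le.trans hk')).resolve_right (aux_excl2 hP' hBP hCP hBCle)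
    have hnot : B ∩ C ∉ Q' := aux_excl2 hQ' hBQ hCQ (le_of_eq hinter)
    have hm2 : (B ∩ C)ᶜ ∈ Q' := (hQ'.2.1 _ (h.le.trans hk'')).resolve_left hnot
    exact absurd (heff.2 _ (Or.inl ⟨hm1, hm2⟩)) (not_le.mpr h)
  have step2 : f C ≤ f (Bᶜ ∩ Cᶜ) := by
    by_contra h
    push_neg at h
    have hm1 : Bᶜ ∩ Cᶜ ∈ Q' :=
      (hQ'.2.1 _ (h.le.trans hk'')).resolve_right (aux_excl2 hQ' hBQ hCQ
        (Set.compl_subset_compl.mpr (Set.inter_subset_left.trans Set.subset_union_left)))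
    have hnot : Bᶜ ∩ Cᶜ ∉ P' := aux_excl2 hP' hBP hCP (by rw [Set.compl_union])
    have hm2 : (Bᶜ ∩ Cᶜ)ᶜ ∈ P' := (hP'.2.1 _ (h.le.trans hk')).resolve_left hnot
    exact absurd (heff.2 _ (Or.inr ⟨hm2, hm1⟩)) (not_le.mpr h)
  have s1 := hsub B C
  have s2 := hsub Bᶜ Cᶜ
  have e1 : f Cᶜ = f C := (hsym C).symm
  have e2 : f Bᶜ = f B := (hsym B).symm
  have e3 : f (B ∩ C) = f (Bᶜ ∪ Cᶜ) := by rw [hsym (B ∩ C), Set.compl_inter]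
  omega

/-- From small corners `A ∩ C`, `A ∩ Cᶜ` we find a distinguishing corner. -/
lemma aux_W (hsym : FSymm f)
    (hTP : IsTangle f kP P) (hTQ : IsTangle f kQ Q)
    (hAP : A ∈ P) (hAQ : Aᶜ ∈ Q)
    (h1 : f (A ∩ C) ≤ f A) (h2 : f (A ∩ Cᶜ) ≤ f A) :
    ∃ Z, f Z ≤ f A ∧ Distinguishes Z P Q ∧ AuxCorner A C Z := by
  have hkP : f A ≤ kP := hTP.1 A hAP
  have hkQ : f A ≤ kQ := by rw [hsym A]; exact hTQ.1 Aᶜ hAQ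
  have hX1P : A ∩ C ∈ P := aux_memInter hTP hAP (h1.trans hkP)
  have hX2P : A ∩ Cᶜ ∈ P := aux_memInter hTP hAP (h2.trans hkP)
  rcases hTQ.2.1 (A ∩ C) (h1.trans hkQ) with hq1 | hq1
  · rcases hTQ.2.1 (A ∩ Cᶜ) (h2.trans hkQ) with hq2 | hq2
    · exfalso
      refine hTQ.2.2.1 Aᶜ hAQ (A ∩ C) hq1 (A ∩ Cᶜ) hq2 ?_
      apply Set.eq_univ_of_forall
      intro e
      by_cases hC : e ∈ C <;> by_cases hA : e ∈ A <;> simp [hA, hC]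
    · exact ⟨A ∩ Cᶜ, h2, Or.inl ⟨hX2P, hq2⟩, A, Cᶜ, Or.inl rfl, Or.inr rfl, Or.inl rfl⟩
  · exact ⟨A ∩ C, h1, Or.inl ⟨hX1P, hq1⟩, A, C, Or.inl rfl, Or.inl rfl, Or.inl rfl⟩

/-- From small corners `A ∩ C`, `A ∪ C` (and `f C ≤ f A`) we find a
distinguishing corner. -/
lemma aux_M2 (hsym : FSymm f) (hsub : FSubmod f)
    (hTP : IsTangle f kP P) (hTQ : IsTangle f kQ Q)
    (hAP : A ∈ P) (hAQ : Aᶜ ∈ Q)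
    (h1 : f (A ∩ C) ≤ f A) (h2 : f (A ∪ C) ≤ f A) (h3 : f C ≤ f A) :
    ∃ Z, f Z ≤ f A ∧ Distinguishes Z P Q ∧ AuxCorner A C Z := by
  have hkP : f A ≤ kP := hTP.1 A hAP
  have hkQ : f A ≤ kQ := by rw [hsym A]; exact hTQ.1 Aᶜ hAQ
  have hX1P : A ∩ C ∈ P := aux_memInter hTP hAP (h1.trans hkP)
  have hUQ : A ∪ C ∉ Q :=
    aux_excl1 hTQ hAQ (by rw [compl_compl]; exact Set.subset_union_left)
  have hUcQ : (A ∪ C)ᶜ ∈ Q := (hTQ.2.1 _ (h2.trans hkQ)).resolve_left hUQ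
  have cornerUC : AuxCorner A C (A ∪ C) :=
    ⟨Aᶜ, Cᶜ, Or.inr rfl, Or.inr rfl, Or.inr (by
      rw [Set.compl_inter, compl_compl, compl_compl])⟩
  rcases hTP.2.1 (A ∪ C) (h2.trans hkP) with hU | hU
  · exact ⟨A ∪ C, h2, Or.inl ⟨hU, hUcQ⟩, cornerUC⟩
  · rcases hTQ.2.1 (A ∩ C) (h1.trans hkQ) with hq1 | hq1
    · have sub := hsub A Cᶜ
      have hCc : f Cᶜ ≤ f A := by rw [← hsym C]; exact h3
      rcases le_or_gt (f (A ∩ Cᶜ)) (f A) with h4 | h4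
      · have hX2P : A ∩ Cᶜ ∈ P := aux_memInter hTP hAP (h4.trans hkP)
        rcases hTQ.2.1 (A ∩ Cᶜ) (h4.trans hkQ) with hq2 | hq2
        · exfalso
          refine hTQ.2.2.1 Aᶜ hAQ (A ∩ C) hq1 (A ∩ Cᶜ) hq2 ?_
          apply Set.eq_univ_of_forall
          intro e
          by_cases hC : e ∈ C <;> by_cases hA : e ∈ A <;> simp [hA, hC]
        · exact ⟨A ∩ Cᶜ, h4, Or.inl ⟨hX2P, hq2⟩, A, Cᶜ, Or.inl rfl, Or.inr rfl,
            Or.inl rfl⟩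
      · have h5 : f (A ∪ Cᶜ) ≤ f A := by omega
        have hZQ : A ∪ Cᶜ ∉ Q :=
          aux_excl1 hTQ hAQ (by rw [compl_compl]; exact Set.subset_union_left)
        have hZcQ : (A ∪ Cᶜ)ᶜ ∈ Q := (hTQ.2.1 _ (h5.trans hkQ)).resolve_left hZQ
        rcases hTP.2.1 (A ∪ Cᶜ) (h5.trans hkP) with hZ | hZ
        · exact ⟨A ∪ Cᶜ, h5, Or.inl ⟨hZ, hZcQ⟩, Aᶜ, C, Or.inr rfl, Or.inl rfl,
            Or.inr (by rw [Set.compl_inter, compl_compl])⟩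
        · exfalso
          refine hTP.2.2.1 A hAP ((A ∪ Cᶜ)ᶜ) hZ ((A ∪ C)ᶜ) hU ?_
          apply Set.eq_univ_of_forall
          intro e
          by_cases hC : e ∈ C <;> by_cases hA : e ∈ A <;> simp [hA, hC]
    · exact ⟨A ∩ C, h1, Or.inl ⟨hX1P, hq1⟩, A, C, Or.inl rfl, Or.inl rfl, Or.inl rfl⟩

/-- Crossing case where `f C < f A` and `C ∈ P ∩ Q`. -/
lemma aux_M1 (hsym : FSymm f) (hsub : FSubmod f)
    (hTP : IsTangle f kP P) (hTQ : IsTangle f kQ Q)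
    (hAP : A ∈ P) (hAQ : Aᶜ ∈ Q) (hCP : C ∈ P) (hCQ : C ∈ Q)
    (hP' : IsTangle f k' P') (hQ' : IsTangle f k'' Q')
    (hCP' : C ∈ P') (hCQ' : Cᶜ ∈ Q') (heffC : DistinguishesEff f C P' Q')
    (hm : f C < f A) :
    ∃ Z, f Z ≤ f A ∧ Distinguishes Z P Q ∧ AuxCorner A C Z := by
  have hkP : f A ≤ kP := hTP.1 A hAP
  have hkQ : f A ≤ kQ := by rw [hsym A]; exact hTQ.1 Aᶜ hAQ
  rcases le_or_gt (f (A ∪ C)) (f A) with h | h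
  · have hZP : A ∪ C ∈ P := aux_memUnion hTP hAP hCP (h.trans hkP)
    have hZQ : A ∪ C ∉ Q :=
      aux_excl1 hTQ hAQ (by rw [compl_compl]; exact Set.subset_union_left)
    have hZcQ : (A ∪ C)ᶜ ∈ Q := (hTQ.2.1 _ (h.trans hkQ)).resolve_left hZQ
    exact ⟨A ∪ C, h, Or.inl ⟨hZP, hZcQ⟩, Aᶜ, Cᶜ, Or.inr rfl, Or.inr rfl,
      Or.inr (by rw [Set.compl_inter, compl_compl, compl_compl])⟩
  · rcases le_or_gt (f (Aᶜ ∪ C)) (f A) with h' | h'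
    · have hfkQ : f (Aᶜ ∪ C) ≤ kQ := h'.trans hkQ
      have hZQ : Aᶜ ∪ C ∈ Q := aux_memUnion hTQ hAQ hCQ hfkQ
      have hZP : Aᶜ ∪ C ∉ P := aux_excl1 hTP hAP Set.subset_union_left
      have hZcP : (Aᶜ ∪ C)ᶜ ∈ P := (hTP.2.1 _ (h'.trans hkP)).resolve_left hZP
      exact ⟨Aᶜ ∪ C, h', Or.inr ⟨hZcP, hZQ⟩, A, Cᶜ, Or.inl rfl, Or.inr rfl,
        Or.inr (by rw [Set.compl_inter, compl_compl])⟩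
    · exfalso
      have s1 := hsub A C
      have s2 := hsub Aᶜ C
      have e1 : f Aᶜ = f A := (hsym A).symm
      have c1 : f (A ∩ C) < f C := by omega
      have c2 : f (Aᶜ ∩ C) < f C := by omega
      exact aux_X hP' hQ' hsym hCP' hCQ' heffC c1 c2

/-- Main crossing lemma: if `A` efficiently distinguishes `P`,`Q` and `C`
efficiently distinguishes some tangles, then some corner of `A`,`C`
efficiently distinguishes `P`,`Q`. -/
lemma aux_cross (hsym : FSymm f) (hsub : FSubmod f)
    (hTP : IsTangle f kP P) (hTQ : IsTangle f kQ Q)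
    (hAP : A ∈ P) (hAQ : Aᶜ ∈ Q) (heffA : DistinguishesEff f A P Q)
    (hP' : IsTangle f k' P') (hQ' : IsTangle f k'' Q')
    (hCP' : C ∈ P') (hCQ' : Cᶜ ∈ Q') (heffC : DistinguishesEff f C P' Q') :
    ∃ Z, DistinguishesEff f Z P Q ∧ AuxCorner A C Z := by
  have hkP : f A ≤ kP := hTP.1 A hAP
  have hkQ : f A ≤ kQ := by rw [hsym A]; exact hTQ.1 Aᶜ hAQ
  suffices h : ∃ Z, f Z ≤ f A ∧ Distinguishes Z P Q ∧ AuxCorner A C Z by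
    obtain ⟨Z, hfZ, hd, hc⟩ := h
    exact ⟨Z, ⟨hd, fun W hW => hfZ.trans (heffA.2 W hW)⟩, hc⟩
  rcases lt_or_ge (f C) (f A) with hm | hm
  · -- f C < f A : `P` and `Q` orient `C` and agree on it
    have hndist : ¬ Distinguishes C P Q :=
      fun h => absurd (heffA.2 C h) (not_le.mpr hm)
    have hoP := hTP.2.1 C (hm.le.trans hkP)
    have hoQ := hTQ.2.1 C (by rw [hsym C] at hm; exact ((hsym C).symm ▸ hm.le).trans hkQ)
    rcases hoP with h1 | h1
    · have h2 : C ∈ Q := by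
        rcases hoQ with h2 | h2
        · exact h2
        · exact absurd (Or.inl ⟨h1, h2⟩) hndist
      exact aux_M1 hsym hsub hTP hTQ hAP hAQ h1 h2 hP' hQ' hCP' hCQ' heffC hm
    · have h2 : Cᶜ ∈ Q := by
        rcases hoQ with h2 | h2
        · exact absurd (Or.inr ⟨h1, h2⟩) hndist
        · exact h2
      have hmc : f Cᶜ < f A := by rw [← hsym C]; exact hm
      obtain ⟨Z, hfZ, hd, hc⟩ := aux_M1 hsym hsub hTP hTQ hAP hAQ h1 h2 hQ' hP'
        hCQ' (by rw [compl_compl]; exact hCP')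
        (aux_effSymm (aux_effCompl hsym heffC)) hmc
      exact ⟨Z, hfZ, hd, aux_cornerComplC hc⟩
  · -- f A ≤ f C : `P'` and `Q'` orient `A`
    have hk' : f C ≤ k' := hP'.1 C hCP'
    have hk'' : f C ≤ k'' := by rw [hsym C]; exact hQ'.1 Cᶜ hCQ'
    have hAk' : f A ≤ k' := hm.trans hk'
    have hAk'' : f A ≤ k'' := hm.trans hk''
    rcases hP'.2.1 A hAk' with h1 | h1 <;> rcases hQ'.2.1 A hAk'' with h2 | h2
    · -- A ∈ P', A ∈ Q' : agreed
      obtain ⟨c1, c2⟩ := aux_Y hsym hsub hP' hQ' hCP' hCQ' heffC h1 h2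
      exact aux_W hsym hTP hTQ hAP hAQ c1 c2
    · -- A ∈ P', Aᶜ ∈ Q' : A distinguishes P', Q'
      have h3 : f C ≤ f A := heffC.2 A (Or.inl ⟨h1, h2⟩)
      obtain ⟨c1, c2⟩ := aux_M2prep hsym hsub hP' hQ' hCP' hCQ' heffC h1 h2
      exact aux_M2 hsym hsub hTP hTQ hAP hAQ c1 c2 h3
    · -- Aᶜ ∈ P', A ∈ Q' : A distinguishes the other way
      have h3 : f C ≤ f A := heffC.2 A (Or.inr ⟨h1, h2⟩)
      obtain ⟨c1, c2⟩ := aux_M2prep hsym hsub hP' hQ' hCP' hCQ' heffC h1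
        (by rw [compl_compl]; exact h2)
      have e0 : f Aᶜ = f A := (hsym A).symm
      have c1' : f (A ∩ Cᶜ) ≤ f A := by
        have : f (A ∩ Cᶜ) = f (Aᶜ ∪ C) := by
          rw [hsym (A ∩ Cᶜ), Set.compl_inter, compl_compl]
        omega
      have c2' : f (A ∪ Cᶜ) ≤ f A := by
        have : f (A ∪ Cᶜ) = f (Aᶜ ∩ C) := by
          rw [hsym (A ∪ Cᶜ), Set.compl_union, compl_compl]
        omega
      have h3' : f Cᶜ ≤ f A := by rw [← hsym C]; exact h3
      obtain ⟨Z, hfZ, hd, hc⟩ := aux_M2 hsym hsub hTP hTQ hAP hAQ c1' c2' h3'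
      exact ⟨Z, hfZ, hd, aux_cornerComplC hc⟩
    · -- Aᶜ ∈ P', Aᶜ ∈ Q' : agreed on Aᶜ
      obtain ⟨c1, c2⟩ := aux_Y hsym hsub hP' hQ' hCP' hCQ' heffC h1 h2
      obtain ⟨Z, hfZ, hd, hc⟩ := aux_W hsym hTQ hTP hAQ
        (by rw [compl_compl]; exact hAP) c1 c2
      exact ⟨Z, hfZ.trans (le_of_eq (hsym A).symm), aux_distSymm hd,
        aux_cornerComplA hc⟩

end Aux

/-- Main theorem: a maximal nested set of separations, each of which
distinguishes some two tangles efficiently, distinguishes any two (distinct)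
maximal tangles efficiently. -/
theorem stmt_13 [Fintype E] (f : Set E → ℤ) (hsym : FSymm f) (hsub : FSubmod f)
    (N : Set (Set E))
    (hN : (∀ A ∈ N, ∀ C ∈ N, Nested A Aᶜ C Cᶜ) ∧
      ∀ A ∈ N, ∃ P Q : Set (Set E), (∃ k, IsTangle f k P) ∧
        (∃ k, IsTangle f k Q) ∧ DistinguishesEff f A P Q)
    (hmax : ∀ N' : Set (Set E), N ⊆ N' →
      ((∀ A ∈ N', ∀ C ∈ N', Nested A Aᶜ C Cᶜ) ∧
        ∀ A ∈ N', ∃ P Q : Set (Set E), (∃ k, IsTangle f k P) ∧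
          (∃ k, IsTangle f k Q) ∧ DistinguishesEff f A P Q) → N' = N)
    (P Q : Set (Set E)) (hP : IsMaximalTangle f P) (hQ : IsMaximalTangle f Q)
    (hPQ : P ≠ Q) :
    ∃ A ∈ N, DistinguishesEff f A P Q := by
  obtain ⟨⟨kP, hTP⟩, hPmax⟩ := hP
  obtain ⟨⟨kQ, hTQ⟩, hQmax⟩ := hQ
  -- some separation distinguishes `P` and `Q`
  have hex : ∃ A, Distinguishes A P Q := by
    by_contra h
    push_neg at h
    rcases le_total kP kQ with hk | hk
    · refine hPQ (hPmax Q ⟨kQ, hTQ⟩ ?_).symm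
      intro A hA
      rcases hTQ.2.1 A ((hTP.1 A hA).trans hk) with h' | h'
      · exact h'
      · exact absurd (Or.inl ⟨hA, h'⟩) (h A)
    · refine hPQ (hQmax P ⟨kP, hTP⟩ ?_)
      intro A hA
      rcases hTP.2.1 A ((hTQ.1 A hA).trans hk) with h' | h'
      · exact h'
      · exact absurd (Or.inr ⟨h', hA⟩) (h A)
  -- an efficient distinguisher exists
  have heffex : ({A : Set E | DistinguishesEff f A P Q}).Nonempty := by
    obtain ⟨A₀, hA₀, hmin⟩ :=
      Set.exists_min_image {A : Set E | Distinguishes A P Q} f (Set.toFinite _) hex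
    exact ⟨A₀, hA₀, hmin⟩
  -- choose an efficient distinguisher crossing as few members of `N` as possible
  obtain ⟨A, hAeff, hAmin⟩ :=
    Set.exists_min_image {A : Set E | DistinguishesEff f A P Q}
      (fun A => ({D ∈ N | ¬ Nested A Aᶜ D Dᶜ}).ncard) (Set.toFinite _) heffex
  have hAeff' : DistinguishesEff f A P Q := hAeff
  by_cases hcross : ∃ C ∈ N, ¬ Nested A Aᶜ C Cᶜ
  · exfalso
    obtain ⟨C, hCN, hXC⟩ := hcross
    obtain ⟨P', Q', ⟨k', hP'⟩, ⟨k'', hQ'⟩, heffC⟩ := hN.2 C hCN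
    have hZex : ∃ Z, DistinguishesEff f Z P Q ∧ AuxCorner A C Z := by
      rcases heffC.1 with ⟨hCP', hCQ'⟩ | ⟨hCP', hCQ'⟩
      · rcases hAeff'.1 with ⟨hAP, hAQ⟩ | ⟨hAP, hAQ⟩
        · exact aux_cross hsym hsub hTP hTQ hAP hAQ hAeff' hP' hQ' hCP' hCQ' heffC
        · obtain ⟨Z, hZe, hZc⟩ := aux_cross hsym hsub hTQ hTP hAQ hAP
            (aux_effSymm hAeff') hP' hQ' hCP' hCQ' heffC
          exact ⟨Z, aux_effSymm hZe, hZc⟩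
      · rcases hAeff'.1 with ⟨hAP, hAQ⟩ | ⟨hAP, hAQ⟩
        · exact aux_cross hsym hsub hTP hTQ hAP hAQ hAeff' hQ' hP' hCQ' hCP'
            (aux_effSymm heffC)
        · obtain ⟨Z, hZe, hZc⟩ := aux_cross hsym hsub hTQ hTP hAQ hAP
            (aux_effSymm hAeff') hQ' hP' hCQ' hCP' (aux_effSymm heffC)
          exact ⟨Z, aux_effSymm hZe, hZc⟩
    obtain ⟨Z, hZeff, hZcorner⟩ := hZex
    have hZC : Nested Z Zᶜ C Cᶜ := aux_cornerNestedC hZcorner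
    have hss : {D ∈ N | ¬ Nested Z Zᶜ D Dᶜ} ⊂ {D ∈ N | ¬ Nested A Aᶜ D Dᶜ} := by
      rw [Set.ssubset_def]
      constructor
      · rintro D ⟨hDN, hDZ⟩
        exact ⟨hDN, fun hAD =>
          hDZ (aux_cornerNested hXC hZcorner hAD (hN.1 C hCN D hDN))⟩
      · intro hc
        exact (hc ⟨hCN, hXC⟩).2 hZC
    exact (Set.ncard_lt_ncard hss (Set.toFinite _)).not_ge (hAmin Z hZeff)
  · push_neg at hcross
    have hAN : A ∈ N := by
      have h' := hmax (insert A N) (Set.subset_insert _ _) ⟨?_, ?_⟩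
      · rw [← h']; exact Set.mem_insert _ _
      · intro X hX Y hY
        rcases Set.mem_insert_iff.mp hX with hX' | hX' <;>
          rcases Set.mem_insert_iff.mp hY with hY' | hY'
        · rw [hX', hY']; exact Or.inl subset_rfl
        · rw [hX']; exact hcross Y hY'
        · rw [hY']; exact aux_nestedComm (hcross X hX')
        · exact hN.1 X hX' Y hY'
      · intro X hX
        rcases Set.mem_insert_iff.mp hX with hX' | hX'
        · rw [hX']; exact ⟨P, Q, ⟨kP, hTP⟩, ⟨kQ, hTQ⟩, hAeff'⟩
        · exact hN.2 X hX'
    exact ⟨A, hAN, hAeff'⟩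
end

section
/- Let (T, (P_t)) be a tree-decomposition of a finite set E with symmetric submodular order function, and let Q be a tangle that orients every separation corresponding to an edge of T. Then there is a unique smallest subtree S(Q) of T in which Q lives; in particular, if Q lives in subgraphs S₁ and S₂ of T, then S₁ ∩ S₂ is nonempty and Q lives in S₁ ∩ S₂. -/
variable {E : Type*}

variable {V : Type*}

/-- A tangle `Q` lives in a nonempty subgraph `S` of the decomposition tree if
for every vertex `t` of `S` and every edge `tu` incident with `t` but not in
`S`, `Q` orients the corresponding separation towards the `t`-side, i.e. the
`u`-side is small in `Q`. -/
def LivesIn (G : SimpleGraph V) (P : V → Set E) (Q : Set (Set E))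
    (S : G.Subgraph) : Prop :=
  S.verts.Nonempty ∧
    ∀ t ∈ S.verts, ∀ u : V, G.Adj t u → ¬ S.Adj t u → treeSide G P u t ∈ Q

/-!
Orient each edge of the tree towards its side that is big in `Q`. Two small sides of a tangle
never cover `E`, while the two sides of an edge do, so every edge gets exactly one orientation.
Following the orientation, the set of vertices on the big side strictly shrinks, so an oriented edge
whose big side is smallest ends at a sink: a vertex `t₀` all of whose edges point towards it, i.e.
`Q` lives in `{t₀}`. A subgraph in which `Q` lives is closed under following the orientation, so it
contains a sink too. Sinks are unique: for sinks `t₀ ≠ t₁`, the `t₀`-side of the first edge `t₀u`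
of the path to `t₁` lies in the small side of the first edge of the path back, so two small sides
would cover `E`. Hence `{t₀}` is contained in every subgraph in which `Q` lives.
-/

open SimpleGraph Set

namespace SimpleGraph

variable {G : SimpleGraph V} {a c d t u w x y : V}

lemma deleteEdges_adj_of_ne (h : G.Adj u w) (hwt : w ≠ t) :
    (G.deleteEdges {s(t, u)}).Adj u w := by
  refine deleteEdges_adj.2 ⟨h, fun he => hwt ?_⟩
  rcases Sym2.eq_iff.1 (mem_singleton_iff.1 he) with ⟨rfl, rfl⟩ | ⟨-, rfl⟩ <;> rfl

lemma reachable_deleteEdges_or (h : G.Reachable t x) :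
    (G.deleteEdges {s(t, u)}).Reachable t x ∨ (G.deleteEdges {s(t, u)}).Reachable u x := by
  rw [reachable_iff_reflTransGen] at h
  induction h with
  | refl => exact .inl .rfl
  | @tail y z _ hyz ih =>
    by_cases he : s(y, z) = s(t, u)
    · rcases Sym2.eq_iff.1 he with ⟨-, rfl⟩ | ⟨-, rfl⟩
      · exact .inr .rfl
      · exact .inl .rfl
    · have hyz' : (G.deleteEdges {s(t, u)}).Adj y z := deleteEdges_adj.2 ⟨hyz, he⟩
      exact ih.imp (·.trans hyz'.reachable) (·.trans hyz'.reachable)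

/-- A walk from `a` that never reaches `d` uses no edge at `d`. -/
lemma reachable_deleteEdges_of_not_reachable {e e' : Sym2 V}
    (hx : (G.deleteEdges {e}).Reachable a x) (had : ¬ (G.deleteEdges {e}).Reachable a d)
    (hd : d ∈ e') : (G.deleteEdges {e'}).Reachable a x := by
  classical
  obtain ⟨p⟩ := hx
  refine ⟨p.transfer _ fun g hg => ?_⟩
  rw [edgeSet_deleteEdges]
  refine ⟨edgeSet_mono (deleteEdges_le _) (p.edges_subset_edgeSet hg), ?_⟩
  rintro rfl
  exact had ⟨p.takeUntil d (p.mem_support_of_mem_edges hg hd)⟩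

lemma Reachable.exists_adj_reachable_deleteEdges (h : G.Reachable x y) (hxy : x ≠ y) :
    ∃ u, G.Adj x u ∧ (G.deleteEdges {s(x, u)}).Reachable u y := by
  obtain ⟨p, hp⟩ := h.exists_isPath
  cases p with
  | nil => exact absurd rfl hxy
  | cons hxu q =>
    obtain ⟨-, hx⟩ := (Walk.cons_isPath_iff _ _).1 hp
    exact ⟨_, hxu, reachable_deleteEdges_iff_exists_walk.2
      ⟨q, fun he => hx (q.fst_mem_support_of_mem_edges he)⟩⟩

lemma IsAcyclic.not_reachable_deleteEdges (hG : G.IsAcyclic) (h : G.Adj a c) :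
    ¬ (G.deleteEdges {s(a, c)}).Reachable a c :=
  isBridge_iff.1 (isAcyclic_iff_forall_adj_isBridge.1 hG h)

lemma IsAcyclic.not_reachable_deleteEdges_of_reachable (hG : G.IsAcyclic) (h : G.Adj a c)
    (ha : (G.deleteEdges {s(a, c)}).Reachable a x) :
    ¬ (G.deleteEdges {s(a, c)}).Reachable c x :=
  fun hc => hG.not_reachable_deleteEdges h (ha.trans hc.symm)

lemma IsAcyclic.reachable_deleteEdges_ssubset (hG : G.IsAcyclic) (htu : G.Adj t u)
    (huw : G.Adj u w) (hwt : w ≠ t) :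
    {x | (G.deleteEdges {s(u, w)}).Reachable w x} ⊂
      {x | (G.deleteEdges {s(t, u)}).Reachable u x} := by
  have hwu : ¬ (G.deleteEdges {s(u, w)}).Reachable w u := fun h =>
    hG.not_reachable_deleteEdges huw h.symm
  have hwt' : ¬ (G.deleteEdges {s(u, w)}).Reachable w t := fun h => by
    rw [Sym2.eq_swap] at h hwu
    exact hwu (h.trans (deleteEdges_adj_of_ne htu.symm (Ne.symm hwt)).reachable.symm)
  refine (ssubset_iff_of_subset fun x hx => ?_).2 ⟨u, .rfl, hwu⟩
  exact (deleteEdges_adj_of_ne huw hwt).reachable.trans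
    (reachable_deleteEdges_of_not_reachable hx hwt' (Sym2.mem_mk_left t u))

end SimpleGraph

lemma IsTangle.union_ne_univ {f : Set E → ℤ} {k : ℤ} {Q : Set (Set E)} (hQ : IsTangle f k Q)
    {A B : Set E} (hA : A ∈ Q) (hB : B ∈ Q) : A ∪ B ≠ univ := by
  simpa [union_assoc] using hQ.2.2.1 A hA B hB B hB

section TreeDecomposition

variable {G : SimpleGraph V} {P : V → Set E} {Q : Set (Set E)} {a b c d t u : V}

def IsSink (G : SimpleGraph V) (P : V → Set E) (Q : Set (Set E)) (t : V) : Prop :=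
  ∀ u, G.Adj t u → treeSide G P u t ∈ Q

lemma treeSide_subset_treeSide (hca : (G.deleteEdges {s(c, d)}).Reachable c a)
    (had : ¬ (G.deleteEdges {s(a, b)}).Reachable a d) :
    treeSide G P a b ⊆ treeSide G P c d :=
  biUnion_subset_biUnion_left fun _ hx =>
    hca.trans (reachable_deleteEdges_of_not_reachable hx had (Sym2.mem_mk_right c d))

lemma treeSide_union_treeSide (hG : G.Connected) (hP : ⋃ x, P x = univ) (t u : V) :
    treeSide G P t u ∪ treeSide G P u t = univ := by
  refine eq_univ_of_forall fun e => ?_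
  obtain ⟨x, hx⟩ := mem_iUnion.1 (hP ▸ mem_univ e : e ∈ ⋃ x, P x)
  rcases reachable_deleteEdges_or (u := u) (hG.preconnected t x) with h | h
  · exact .inl (mem_biUnion h hx)
  · refine .inr (mem_biUnion (x := x) ?_ hx)
    rwa [mem_ofPred_eq, Sym2.eq_swap]

lemma treeSide_notMem_of_mem {f : Set E → ℤ} {k : ℤ} (hQ : IsTangle f k Q) (hG : G.Connected)
    (hP : ⋃ x, P x = univ) (h : treeSide G P t u ∈ Q) : treeSide G P u t ∉ Q :=
  fun h' => hQ.union_ne_univ h h' (treeSide_union_treeSide hG hP t u)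

lemma IsSink.eq {f : Set E → ℤ} {k : ℤ} (hQ : IsTangle f k Q) (hG : G.IsTree)
    (hP : ⋃ x, P x = univ) {t₀ t₁ : V} (h₀ : IsSink G P Q t₀) (h₁ : IsSink G P Q t₁) :
    t₀ = t₁ := by
  by_contra hne
  obtain ⟨u, ht₀u, hu⟩ := (hG.1.preconnected t₀ t₁).exists_adj_reachable_deleteEdges hne
  obtain ⟨v, ht₁v, hv⟩ := (hG.1.preconnected t₁ t₀).exists_adj_reachable_deleteEdges (Ne.symm hne)
  rw [Sym2.eq_swap] at hv
  have hsub : treeSide G P t₀ u ⊆ treeSide G P v t₁ := by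
    refine treeSide_subset_treeSide hv fun ht₁ => ?_
    rw [Sym2.eq_swap] at hu
    exact hG.2.not_reachable_deleteEdges_of_reachable ht₀u.symm hu (by rwa [Sym2.eq_swap])
  refine hQ.union_ne_univ (h₀ u ht₀u) (h₁ v ht₁v) (eq_univ_of_univ_subset ?_)
  rw [← treeSide_union_treeSide hG.1 hP u t₀]
  exact union_subset_union_right _ hsub

lemma exists_isSink_mem [Finite V] {f : Set E → ℤ} {k : ℤ} (hQ : IsTangle f k Q) (hG : G.IsTree)
    (hP : ⋃ x, P x = univ) (hor : ∀ t u, G.Adj t u → treeSide G P t u ∈ Q ∨ treeSide G P u t ∈ Q)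
    {W : Set V} (hne : W.Nonempty)
    (hW : ∀ t ∈ W, ∀ u, G.Adj t u → treeSide G P t u ∈ Q → u ∈ W) :
    ∃ t ∈ W, IsSink G P Q t := by
  by_cases hout : ∃ p : V × V, p.1 ∈ W ∧ G.Adj p.1 p.2 ∧ treeSide G P p.1 p.2 ∈ Q
  · obtain ⟨⟨t, u⟩, ⟨ht, htu, htuQ⟩, hmin⟩ := exists_min_image _
      (fun p : V × V => {x | (G.deleteEdges {s(p.1, p.2)}).Reachable p.2 x}.ncard)
      (toFinite _) hout
    refine ⟨u, hW t ht u htu htuQ, fun w huw => ?_⟩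
    by_contra hwu
    have huwQ : treeSide G P u w ∈ Q := (hor u w huw).resolve_right hwu
    have hwt : w ≠ t := by
      rintro rfl
      exact treeSide_notMem_of_mem hQ hG.1 hP htuQ huwQ
    have hle := hmin (u, w) ⟨hW t ht u htu htuQ, huw, huwQ⟩
    have hlt := ncard_lt_ncard (hG.2.reachable_deleteEdges_ssubset htu huw hwt) (toFinite _)
    exact hle.not_gt hlt
  · push Not at hout
    obtain ⟨t, ht⟩ := hne
    exact ⟨t, ht, fun u htu => (hor t u htu).resolve_left (hout (t, u) ht htu)⟩

lemma LivesIn.exists_isSink [Finite V] {f : Set E → ℤ} {k : ℤ} (hQ : IsTangle f k Q)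
    (hG : G.IsTree) (hP : ⋃ x, P x = univ)
    (hor : ∀ t u, G.Adj t u → treeSide G P t u ∈ Q ∨ treeSide G P u t ∈ Q) {S : G.Subgraph}
    (hS : LivesIn G P Q S) : ∃ t ∈ S.verts, IsSink G P Q t := by
  refine exists_isSink_mem hQ hG hP hor hS.1 fun t ht u htu htuQ => ?_
  by_contra hu
  exact treeSide_notMem_of_mem hQ hG.1 hP htuQ (hS.2 t ht u htu fun h => hu h.snd_mem)

lemma IsSink.livesIn (h : IsSink G P Q t) : LivesIn G P Q (G.singletonSubgraph t) :=
  ⟨singleton_nonempty t, by rintro _ rfl u htu -; exact h u htu⟩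

lemma LivesIn.inf {S₁ S₂ : G.Subgraph} (h₁ : LivesIn G P Q S₁) (h₂ : LivesIn G P Q S₂)
    (hne : (S₁ ⊓ S₂).verts.Nonempty) : LivesIn G P Q (S₁ ⊓ S₂) := by
  refine ⟨hne, fun t ht u htu hnot => ?_⟩
  by_cases h : S₁.Adj t u
  · exact h₂.2 t ht.2 u htu fun h' => hnot ⟨h, h'⟩
  · exact h₁.2 t ht.1 u htu h

end TreeDecomposition

theorem stmt_15_general [Fintype V] (f : Set E → ℤ)
    (G : SimpleGraph V) (hG : G.IsTree) (P : V → Set E) (hP : IsPartitionFam P)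
    (Q : Set (Set E)) (hQ : ∃ k, IsTangle f k Q)
    (hor : ∀ t u : V, G.Adj t u →
      treeSide G P t u ∈ Q ∨ treeSide G P u t ∈ Q) :
    (∀ S₁ S₂ : G.Subgraph, LivesIn G P Q S₁ → LivesIn G P Q S₂ →
      LivesIn G P Q (S₁ ⊓ S₂)) ∧
    ∃! S : G.Subgraph, LivesIn G P Q S ∧
      ∀ S' : G.Subgraph, LivesIn G P Q S' → S ≤ S' := by
  obtain ⟨k, hQ⟩ := hQ
  have : Nonempty V := hG.1.nonempty
  obtain ⟨t₀, -, ht₀⟩ := exists_isSink_mem hQ hG hP.2 hor univ_nonempty (fun _ _ _ _ _ => trivial)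
  have hmem : ∀ S : G.Subgraph, LivesIn G P Q S → t₀ ∈ S.verts := fun S hS => by
    obtain ⟨t, ht, hsink⟩ := hS.exists_isSink hQ hG hP.2 hor
    rwa [ht₀.eq hQ hG hP.2 hsink]
  refine ⟨fun S₁ S₂ h₁ h₂ => h₁.inf h₂ ⟨t₀, hmem S₁ h₁, hmem S₂ h₂⟩,
    G.singletonSubgraph t₀, ⟨ht₀.livesIn, fun S hS => (singletonSubgraph_le_iff _ _).2 (hmem S hS)⟩,
    fun S hS => le_antisymm (hS.2 _ ht₀.livesIn) ((singletonSubgraph_le_iff _ _).2 (hmem S hS.1))⟩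

/-- If a tangle lives in two subgraphs then it lives in their (nonempty)
intersection; consequently there is a unique smallest subtree in which it
lives. -/
theorem stmt_15 [Fintype E] [Fintype V] (f : Set E → ℤ)
    (hsym : FSymm f) (hsub : FSubmod f)
    (G : SimpleGraph V) (hG : G.IsTree) (P : V → Set E) (hP : IsPartitionFam P)
    (Q : Set (Set E)) (hQ : ∃ k, IsTangle f k Q)
    (hor : ∀ t u : V, G.Adj t u →
      treeSide G P t u ∈ Q ∨ treeSide G P u t ∈ Q) :
    (∀ S₁ S₂ : G.Subgraph, LivesIn G P Q S₁ → LivesIn G P Q S₂ →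
      LivesIn G P Q (S₁ ⊓ S₂)) ∧
    ∃! S : G.Subgraph, LivesIn G P Q S ∧
      ∀ S' : G.Subgraph, LivesIn G P Q S' → S ≤ S' :=
  stmt_15_general f G hG P hP Q hQ hor
end

section
/- Let (T,(P_t)) be a tree-decomposition of a finite set E, and let P and Q be two tangles each orienting all edge-separations of T. If the subtrees S(P) and S(Q) intersect, then no separation corresponding to an edge of T distinguishes P and Q. -/
variable {E : Type*}

variable {V : Type*}

/-! A tangle orienting the edge `tu` towards `t` lives in the component of `T - tu` containing `t`.
As the parts partition `E`, the two sides of the separation of `tu` are complementary, so if `tu`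
distinguishes `P` and `Q` then `S(P)` and `S(Q)` lie in different components of `T - tu`. -/

namespace SimpleGraph

variable {G : SimpleGraph V} {t u : V}

lemma reachable_deleteEdges_or_of_adj {a b : V} (hab : G.Adj a b)
    (ha : (G.deleteEdges {s(t, u)}).Reachable t a ∨ (G.deleteEdges {s(t, u)}).Reachable u a) :
    (G.deleteEdges {s(t, u)}).Reachable t b ∨ (G.deleteEdges {s(t, u)}).Reachable u b := by
  by_cases he : s(a, b) = s(t, u)
  · rcases Sym2.eq_iff.mp he with ⟨rfl, rfl⟩ | ⟨rfl, rfl⟩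
    · exact Or.inr .rfl
    · exact Or.inl .rfl
  · have hab' : (G.deleteEdges {s(t, u)}).Adj a b := deleteEdges_adj.mpr ⟨hab, he⟩
    exact ha.imp (·.trans hab'.reachable) (·.trans hab'.reachable)

lemma Reachable.deleteEdges_reachable_or {x : V} (h : G.Reachable t x) :
    (G.deleteEdges {s(t, u)}).Reachable t x ∨ (G.deleteEdges {s(t, u)}).Reachable u x := by
  rw [reachable_iff_reflTransGen] at h
  induction h with
  | refl => exact Or.inl .rfl
  | tail _ hab ih => exact reachable_deleteEdges_or_of_adj hab ih

end SimpleGraph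

open SimpleGraph

section TreeSide

variable {G : SimpleGraph V} {Pa : V → Set E} {t u : V}

lemma treeSide_swap_eq_compl (hG : G.Connected) (hb : G.IsBridge s(t, u))
    (hPa : IsPartitionFam Pa) : treeSide G Pa u t = (treeSide G Pa t u)ᶜ := by
  ext e
  simp only [treeSide, Set.mem_iUnion, Set.mem_ofPred_eq, Set.mem_compl_iff, Sym2.eq_swap,
    exists_prop, not_exists, not_and]
  constructor
  · rintro ⟨x, hux, hex⟩ y hty hey
    obtain rfl : x = y := by_contra fun hxy ↦ Set.disjoint_left.mp (hPa.1 x y hxy) hex hey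
    exact isBridge_iff.mp hb (hty.trans hux.symm)
  · intro hne
    obtain ⟨x, hex⟩ := Set.mem_iUnion.mp (hPa.2 ▸ Set.mem_univ e)
    exact ((hG.preconnected t x).deleteEdges_reachable_or (u := u)).elim
      (fun htx ↦ (hne x htx hex).elim) (fun hux ↦ ⟨x, hux, hex⟩)

lemma sInf_livesIn_verts_subset (hb : G.IsBridge s(t, u)) {Q : Set (Set E)}
    (hQ : treeSide G Pa u t ∈ Q) :
    (sInf {S : G.Subgraph | LivesIn G Pa Q S}).verts ⊆
      {x | (G.deleteEdges {s(t, u)}).Reachable t x} := by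
  let C : G.Subgraph := (⊤ : G.Subgraph).induce {x | (G.deleteEdges {s(t, u)}).Reachable t x}
  suffices hC : LivesIn G Pa Q C from fun x hx ↦ Subgraph.verts_mono (sInf_le hC) hx
  refine ⟨⟨t, .rfl⟩, fun a ha b hab hnC ↦ ?_⟩
  have hb' : ¬ (G.deleteEdges {s(t, u)}).Reachable t b := fun htb ↦ hnC ⟨ha, htb, hab⟩
  have he : s(a, b) = s(t, u) := by
    by_contra he
    exact hb' (Reachable.trans ha (deleteEdges_adj.mpr ⟨hab, he⟩).reachable)
  rcases Sym2.eq_iff.mp he with ⟨rfl, rfl⟩ | ⟨rfl, rfl⟩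
  · exact hQ
  · exact (isBridge_iff.mp hb ha).elim

lemma disjoint_sInf_livesIn_verts (hb : G.IsBridge s(t, u)) {P Q : Set (Set E)}
    (hP : treeSide G Pa t u ∈ P) (hQ : treeSide G Pa u t ∈ Q) :
    Disjoint (sInf {S : G.Subgraph | LivesIn G Pa P S}).verts
      (sInf {S : G.Subgraph | LivesIn G Pa Q S}).verts := by
  refine Set.disjoint_left.mpr fun w hwP hwQ ↦ isBridge_iff.mp hb ?_
  have huw : (G.deleteEdges {s(u, t)}).Reachable u w :=
    sInf_livesIn_verts_subset (t := u) (u := t) (by rwa [Sym2.eq_swap]) hP hwP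
  rw [Sym2.eq_swap] at huw
  exact (sInf_livesIn_verts_subset hb hQ hwQ).trans huw.symm

end TreeSide

theorem stmt_17_general
    (G : SimpleGraph V) (hG : G.IsTree) (Pa : V → Set E)
    (hPa : IsPartitionFam Pa)
    (P Q : Set (Set E))
    (hmeet : ((sInf {S : G.Subgraph | LivesIn G Pa P S}).verts ∩
      (sInf {S : G.Subgraph | LivesIn G Pa Q S}).verts).Nonempty) :
    ∀ t u : V, G.Adj t u → ¬ Distinguishes (treeSide G Pa t u) P Q := by
  intro t u hadj hdist
  have hb : G.IsBridge s(t, u) := isAcyclic_iff_forall_adj_isBridge.mp hG.isAcyclic hadj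
  have hb' : G.IsBridge s(u, t) := by rwa [Sym2.eq_swap]
  rw [Distinguishes, ← treeSide_swap_eq_compl hG.connected hb hPa] at hdist
  rcases hdist with ⟨hP, hQ⟩ | ⟨hP, hQ⟩
  · exact Set.not_disjoint_iff_nonempty_inter.mpr hmeet (disjoint_sInf_livesIn_verts hb hP hQ)
  · exact Set.not_disjoint_iff_nonempty_inter.mpr hmeet (disjoint_sInf_livesIn_verts hb' hP hQ)

/-- If the smallest subtrees in which two tangles live intersect, then no
separation corresponding to an edge of the decomposition tree distinguishes
the two tangles. -/
theorem stmt_17 [Fintype E] [Fintype V] (f : Set E → ℤ)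
    (hsym : FSymm f) (hsub : FSubmod f)
    (G : SimpleGraph V) (hG : G.IsTree) (Pa : V → Set E)
    (hPa : IsPartitionFam Pa)
    (P Q : Set (Set E)) (hP : ∃ k, IsTangle f k P) (hQ : ∃ k, IsTangle f k Q)
    (horP : ∀ t u : V, G.Adj t u →
      treeSide G Pa t u ∈ P ∨ treeSide G Pa u t ∈ P)
    (horQ : ∀ t u : V, G.Adj t u →
      treeSide G Pa t u ∈ Q ∨ treeSide G Pa u t ∈ Q)
    (hmeet : ((sInf {S : G.Subgraph | LivesIn G Pa P S}).verts ∩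
      (sInf {S : G.Subgraph | LivesIn G Pa Q S}).verts).Nonempty) :
    ∀ t u : V, G.Adj t u → ¬ Distinguishes (treeSide G Pa t u) P Q :=
  stmt_17_general G hG Pa hPa P Q hmeet
end
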